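/- Let G = (V,E) be a finite connected simple graph with nonempty boundary B ⊆ V such that B is an independent set of G (no edge of G joins two vertices of B). Let d_1 ≤ d_2 ≤ ⋯ ≤ d_{|B|} be the degrees of the boundary vertices listed in increasing order. Then σ_k(G,B) ≤ d_k for every k = 1, 2, …, |B|. -/

import Mathlib

open scoped BigOperators
open Classical

/-- The Dirichlet energy of a function on a finite graph: `∑_{edges xy} (f x - f y)^2`. -/
noncomputable def dirichletEnergy {V : Type*} [Fintype V] (G : SimpleGraph V) (f : V → ℝ) : ℝ :=
  (∑ x : V, ∑ y : V, if G.Adj x y then (f x - f y) ^ 2 else 0) / 2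

/-- The `k`-th Steklov (Dirichlet-to-Neumann) eigenvalue (1-indexed, in increasing order
with multiplicity) of a finite graph `G` with boundary `B`, via the variational
(Courant–Fischer) characterization. -/
noncomputable def steklovEig {V : Type*} [Fintype V] (G : SimpleGraph V) (B : Finset V)
    (k : ℕ) : ℝ :=
  sInf { t : ℝ | ∃ F : Submodule ℝ (V → ℝ),
    Module.finrank ℝ (F.map (LinearMap.funLeft ℝ ℝ (fun x : {v // v ∈ B} => (x : V)))) = k ∧
    ∀ f ∈ F, dirichletEnergy G f ≤ t * ∑ x ∈ B, (f x) ^ 2 }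

/-- The set of leaves (vertices of degree 1) of a finite graph, as a `Finset`. -/
noncomputable def leavesFinset {V : Type*} [Fintype V] (G : SimpleGraph V) : Finset V :=
  Finset.univ.filter fun v => G.degree v = 1

/-- `σ_{k,max}(b,n)`: the maximum of the `k`-th Steklov eigenvalue over all trees with
`b` leaves (as boundary) and `n` vertices. -/
noncomputable def sigmaMax (k b n : ℕ) : ℝ :=
  sSup { s : ℝ | ∃ G : SimpleGraph (Fin n), G.IsTree ∧ (leavesFinset G).card = b ∧
    s = steklovEig G (leavesFinset G) k }

/-- `σ̃_{2,max}(D,n)`: the maximum of the first nontrivial Steklov eigenvalue over all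
trees with diameter `D` and `n` vertices. -/
noncomputable def sigmaTildeMax (D n : ℕ) : ℝ :=
  sSup { s : ℝ | ∃ G : SimpleGraph (Fin n), G.IsTree ∧ G.diam = D ∧
    s = steklovEig G (leavesFinset G) 2 }

/-! Take the `k` boundary vertices of smallest degree and the `k`-dimensional space of functions
supported on them. These vertices are pairwise non-adjacent, so on every edge such a function
vanishes at one endpoint at least, and its Dirichlet energy is `∑ₓ deg x · f(x)² ≤ d_k ∑_B f²`.
The min-max characterization then gives `σ_k ≤ d_k`. -/

open Function Module Submodule

lemma Pi.single_comp_of_injective {ι κ R : Type*} [Zero R] [DecidableEq ι] [DecidableEq κ]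
    {e : κ → ι} (he : Injective e) (j : κ) (r : R) :
    Pi.single (e j) r ∘ e = Pi.single j r := by
  ext x
  simp [Pi.single_apply, he.eq_iff]

lemma finrank_map_funLeft_span_single {R ι κ η : Type*} [Field R] [Finite κ] [Fintype η]
    [DecidableEq ι] [DecidableEq κ] {e : κ → ι} (he : Injective e) {w : η → κ}
    (hw : Injective w) :
    finrank R ((span R (Set.range fun j => Pi.single (e (w j)) (1 : R))).map
      (LinearMap.funLeft R R e)) = Fintype.card η := by
  have hli : LinearIndependent R fun j => (Pi.single (w j) (1 : R) : κ → R) := by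
    simpa [comp_def] using (Pi.basisFun R κ).linearIndependent.comp w hw
  have hrestrict : (LinearMap.funLeft R R e ∘ fun j => Pi.single (e (w j)) (1 : R)) =
      fun j => Pi.single (w j) 1 :=
    funext fun j => Pi.single_comp_of_injective he (w j) 1
  rw [map_span, ← Set.range_comp, hrestrict, finrank_span_eq_card hli]

lemma apply_eq_zero_of_mem_span_single {R ι η : Type*} [Semiring R] [DecidableEq ι]
    {w : η → ι} {f : ι → R} (hf : f ∈ span R (Set.range fun j => Pi.single (w j) (1 : R)))
    {x : ι} (hx : x ∉ Set.range w) : f x = 0 := by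
  induction hf using span_induction with
  | mem g hg =>
    obtain ⟨j, rfl⟩ := hg
    exact Pi.single_eq_of_ne (M := fun _ => R) (fun h => hx ⟨j, h.symm⟩) 1
  | zero => rfl
  | add g h _ _ hg hh => simp [hg, hh]
  | smul a g _ hg => simp [hg]

lemma Multiset.sort_coe_ofFn {β : Type*} [LinearOrder β] {n : ℕ} (g : Fin n → β) :
    (↑(List.ofFn g) : Multiset β).sort (· ≤ ·) = List.ofFn (g ∘ Tuple.sort g) := by
  refine List.Perm.eq_of_pairwise' (Multiset.pairwise_sort _ _)
    (List.sortedLE_ofFn_iff.mpr (Tuple.monotone_sort g)).pairwise ?_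
  rw [← Multiset.coe_eq_coe, Multiset.sort_eq, Multiset.coe_eq_coe]
  exact ((Tuple.sort g).ofFn_comp_perm g).symm

lemma Finset.map_val_eq_ofFn_comp_equivFin {α β : Type*} (s : Finset α) (φ : α → β) :
    s.val.map φ = ↑(List.ofFn fun i => φ (s.equivFin.symm i)) := by
  rw [← Fin.univ_val_map,
    show (fun i => φ (s.equivFin.symm i)) = φ ∘ (↑) ∘ s.equivFin.symm from rfl, ← Multiset.map_map,
    ← Multiset.map_map, Multiset.map_univ_val_equiv, Finset.univ_eq_attach,
    Finset.attach_val, Multiset.attach_map_val]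

lemma Finset.exists_injective_le_sort_getD {α β : Type*} [LinearOrder β] (s : Finset α)
    (φ : α → β) (b : β) {k : ℕ} (hk : k ≤ s.card) :
    ∃ w : Fin k → s, Injective w ∧
      ∀ j, φ (w j) ≤ ((s.val.map φ).sort (· ≤ ·)).getD (k - 1) b := by
  set g : Fin s.card → β := fun i => φ (s.equivFin.symm i)
  refine ⟨s.equivFin.symm ∘ Tuple.sort g ∘ Fin.castLE hk,
    s.equivFin.symm.injective.comp ((Tuple.sort g).injective.comp (Fin.castLE_injective hk)),
    fun j => ?_⟩
  have hk1 : k - 1 < s.card := by have := j.isLt; omega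
  rw [s.map_val_eq_ofFn_comp_equivFin, Multiset.sort_coe_ofFn,
    List.getD_eq_getElem _ _ (by simpa using hk1), List.getElem_ofFn]
  exact Tuple.monotone_sort g (show Fin.castLE hk j ≤ ⟨k - 1, hk1⟩ by simp [Fin.le_def]; omega)

section Steklov

variable {V : Type*} [Fintype V] (G : SimpleGraph V)

lemma dirichletEnergy_nonneg (f : V → ℝ) :
    0 ≤ dirichletEnergy G f := by
  unfold dirichletEnergy
  positivity

lemma dirichletEnergy_eq_sum_degree_sub [DecidableRel G.Adj] (f : V → ℝ) :
    dirichletEnergy G f =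
      ∑ x, G.degree x * f x ^ 2 - ∑ x, ∑ y, if G.Adj x y then f x * f y else 0 := by
  have h := G.lapMatrix_toLinearMap₂' ℝ f
  rw [Matrix.toLinearMap₂'_apply', SimpleGraph.lapMatrix, Matrix.sub_mulVec,
    dotProduct_sub, SimpleGraph.dotProduct_mulVec_degMatrix,
    SimpleGraph.dotProduct_mulVec_adjMatrix] at h
  simp only [dirichletEnergy, mul_assoc, ← sq] at h ⊢
  rw [h]
  -- `dirichletEnergy` decides adjacency classically, not with the given instance
  congr!

lemma dirichletEnergy_le_of_independent [DecidableRel G.Adj] {B : Finset V}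
    (hind : ∀ x ∈ B, ∀ y ∈ B, ¬ G.Adj x y) {f : V → ℝ} {d : ℝ}
    (hf : ∀ x, f x ≠ 0 → x ∈ B ∧ (G.degree x : ℝ) ≤ d) :
    dirichletEnergy G f ≤ d * ∑ x ∈ B, f x ^ 2 := by
  have hcross : ∀ x y, (if G.Adj x y then f x * f y else 0) = 0 := by
    intro x y
    split_ifs with hxy
    · by_contra hne
      obtain ⟨hx, hy⟩ := mul_ne_zero_iff.mp hne
      exact hind x (hf x hx).1 y (hf y hy).1 hxy
    · rfl
  have hsupp : ∑ x ∈ B, G.degree x * f x ^ 2 = ∑ x, G.degree x * f x ^ 2 := by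
    refine Finset.sum_subset (Finset.subset_univ B) fun x _ hx => ?_
    rw [not_imp_comm.mp (fun h => (hf x h).1) hx]
    ring
  calc dirichletEnergy G f = ∑ x ∈ B, G.degree x * f x ^ 2 := by
        simp only [dirichletEnergy_eq_sum_degree_sub, hcross, Finset.sum_const_zero, sub_zero,
          hsupp]
    _ ≤ ∑ x ∈ B, d * f x ^ 2 := by
        refine Finset.sum_le_sum fun x _ => ?_
        by_cases hx : f x = 0
        · simp [hx]
        · gcongr
          exact (hf x hx).2
    _ = d * ∑ x ∈ B, f x ^ 2 := (Finset.mul_sum _ _ _).symm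

lemma nonneg_of_dirichletEnergy_le {B : Finset V} {F : Submodule ℝ (V → ℝ)}
    (hF : F.map (LinearMap.funLeft ℝ ℝ ((↑) : B → V)) ≠ ⊥) {t : ℝ}
    (ht : ∀ f ∈ F, dirichletEnergy G f ≤ t * ∑ x ∈ B, f x ^ 2) : 0 ≤ t := by
  obtain ⟨_, ⟨f, hfF, rfl⟩, hf⟩ := exists_mem_ne_zero_of_ne_bot hF
  obtain ⟨x, hx⟩ := Function.ne_iff.mp hf
  have hpos : 0 < ∑ y ∈ B, f y ^ 2 :=
    Finset.sum_pos' (fun _ _ => sq_nonneg _) ⟨x, x.2, sq_pos_iff.mpr hx⟩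
  nlinarith [ht f hfF, dirichletEnergy_nonneg G f]

lemma steklovEig_le {B : Finset V} {k : ℕ} (hk : 1 ≤ k) {F : Submodule ℝ (V → ℝ)}
    (hF : finrank ℝ (F.map (LinearMap.funLeft ℝ ℝ ((↑) : B → V))) = k) {t : ℝ}
    (ht : ∀ f ∈ F, dirichletEnergy G f ≤ t * ∑ x ∈ B, f x ^ 2) :
    steklovEig G B k ≤ t := by
  refine csInf_le ⟨0, ?_⟩ ⟨F, hF, ht⟩
  rintro s ⟨F', hF', hs⟩
  refine nonneg_of_dirichletEnergy_le G (fun hbot => ?_) hs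
  rw [hbot, finrank_bot] at hF'
  omega

end Steklov

theorem stmt14_general {V : Type*} [Fintype V] (G : SimpleGraph V)
    [DecidableRel G.Adj] (B : Finset V)
    (hind : ∀ x ∈ B, ∀ y ∈ B, ¬ G.Adj x y)
    (k : ℕ) (hk1 : 1 ≤ k) (hk2 : k ≤ B.card) :
    steklovEig G B k ≤
      (((B.val.map fun v => G.degree v).sort (· ≤ ·)).getD (k - 1) 0 : ℝ) := by
  obtain ⟨w, hw, hdeg⟩ := B.exists_injective_le_sort_getD (fun v => G.degree v) 0 hk2
  let F := span ℝ (Set.range fun j => (Pi.single (w j : V) (1 : ℝ) : V → ℝ))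
  refine steklovEig_le G hk1 (F := F) ?_ fun f hf => ?_
  · rw [finrank_map_funLeft_span_single Subtype.val_injective hw, Fintype.card_fin]
  · refine dirichletEnergy_le_of_independent G hind fun x hx => ?_
    obtain ⟨j, rfl⟩ : x ∈ Set.range fun j => (w j : V) := by
      by_contra hx'
      exact hx (apply_eq_zero_of_mem_span_single hf hx')
    exact ⟨(w j).2, by exact_mod_cast hdeg j⟩

/-- Let `G = (V,E)` be a finite connected simple graph with nonempty
boundary `B ⊆ V` such that `B` is an independent set of `G`. Let `d₁ ≤ d₂ ≤ ⋯ ≤ d_{|B|}`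
be the degrees of the boundary vertices listed in increasing order. Then `σ_k(G,B) ≤ d_k`
for every `k = 1, 2, …, |B|`. -/
theorem stmt14 {V : Type*} [Fintype V] [DecidableEq V] (G : SimpleGraph V)
    [DecidableRel G.Adj] (hconn : G.Connected) (B : Finset V) (hB : B.Nonempty)
    (hind : ∀ x ∈ B, ∀ y ∈ B, ¬ G.Adj x y)
    (k : ℕ) (hk1 : 1 ≤ k) (hk2 : k ≤ B.card) :
    steklovEig G B k ≤
      (((B.val.map fun v => G.degree v).sort (· ≤ ·)).getD (k - 1) 0 : ℝ) :=
  stmt14_general G B hind k hk1 hk2
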